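/- arXiv:2011.12347 — 2 statements merged into one kernel-verified Lean document; each statement's English description precedes it below -/
import Mathlib

section
/- Let X be a topological space, Y a real Hilbert space with inner product ⟨·,·⟩, T ⊆ Y a convex set dense in Y, and I : X → ℝ, φ : X → Y two functions such that, for each y ∈ T, the function x ↦ I(x) + ⟨φ(x), y⟩ is lower semicontinuous and inf-compact. Assume there exists a point x₀ ∈ X with φ(x₀) ≠ 0 such that x₀ is a global minimum of both the function I and the function x ↦ ‖φ(x)‖, and inf_{x ∈ X} ⟨φ(x), φ(x₀)⟩ < ‖φ(x₀)‖². Then there exists r > 0 such that the strict minimax inequality sup_{y ∈ B_r} inf_{x ∈ X} (I(x) + ⟨φ(x), y⟩) < inf_{x ∈ X} sup_{y ∈ B_r} (I(x) + ⟨φ(x), y⟩) holds, where B_r = {y ∈ Y : ‖y‖ ≤ r} is the closed ball in Y centered at 0 of radius r. -/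
/-!
Write `f x y = I x + ⟪φ x, y⟫`, `u = φ x₀` and `v = φ x₁`, where `⟪v, u⟫ < ‖u‖²`, i.e. `⟪u, v - u⟫ < 0`.
Moving from `u` towards `v` therefore first shortens `u`: some `t ∈ (0, 1]` has
`‖u + t • (v - u)‖ < ‖u‖`. For every `y` in `B_r`, the infimum over `x` is at most the convex
combination `(1 - t) f x₀ y + t f x₁ y`, whose supremum over `B_r` is at most
`I x₀ + t (I x₁ - I x₀) + r ‖u + t • (v - u)‖`. On the other side, testing `y = (r / ‖φ x‖) • φ x`
and using the minimality of `x₀` gives `sup_{B_r} f x ≥ I x₀ + r ‖u‖` for every `x`. The gap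
`r (‖u‖ - ‖u + t • (v - u)‖)` grows linearly in `r`, so it beats `t (I x₁ - I x₀)` for large `r`.
-/

open scoped RealInnerProductSpace

section InnerProductSpace

variable {E : Type*} [NormedAddCommGroup E] [InnerProductSpace ℝ E]

theorem exists_mem_closedBall_inner_eq_mul_norm (v : E) {r : ℝ} (hr : 0 ≤ r) :
    ∃ y ∈ Metric.closedBall (0 : E) r, ⟪v, y⟫ = r * ‖v‖ := by
  rcases eq_or_ne v 0 with rfl | hv
  · exact ⟨0, Metric.mem_closedBall_self hr, by simp⟩
  have hv' : 0 < ‖v‖ := norm_pos_iff.2 hv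
  refine ⟨(r / ‖v‖) • v, ?_, ?_⟩
  · rw [mem_closedBall_zero_iff, norm_smul, Real.norm_of_nonneg (by positivity),
      div_mul_cancel₀ _ hv'.ne']
  · rw [real_inner_smul_right, real_inner_self_eq_norm_sq]
    field_simp

theorem exists_norm_add_smul_lt_norm {u w : E} (h : ⟪u, w⟫ < 0) :
    ∃ t : ℝ, 0 < t ∧ t ≤ 1 ∧ ‖u + t • w‖ < ‖u‖ := by
  have hw : 0 < ‖w‖ ^ 2 := by
    refine pow_pos (norm_pos_iff.2 ?_) 2
    rintro rfl
    simp at h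
  -- any `t ≤ -⟪u, w⟫ / ‖w‖²` makes `2 t ⟪u, w⟫ + t² ‖w‖² ≤ t ⟪u, w⟫ < 0`
  set t := min 1 (-⟪u, w⟫ / ‖w‖ ^ 2)
  have ht : 0 < t := lt_min one_pos (div_pos (neg_pos.2 h) hw)
  have htw : t * ‖w‖ ^ 2 ≤ -⟪u, w⟫ := (le_div_iff₀ hw).1 (min_le_right _ _)
  refine ⟨t, ht, min_le_left _ _, lt_of_pow_lt_pow_left₀ 2 (norm_nonneg u) ?_⟩
  rw [norm_add_sq_real, real_inner_smul_right, norm_smul, Real.norm_of_nonneg ht.le]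
  nlinarith

theorem min_add_inner_le_of_norm_le {a b r t : ℝ} {u v y : E} (ht₀ : 0 ≤ t) (ht₁ : t ≤ 1)
    (hy : ‖y‖ ≤ r) :
    min (a + ⟪u, y⟫) (b + ⟪v, y⟫) ≤ a + t * (b - a) + r * ‖u + t • (v - u)‖ :=
  calc min (a + ⟪u, y⟫) (b + ⟪v, y⟫) ≤ (1 - t) * (a + ⟪u, y⟫) + t * (b + ⟪v, y⟫) := by
        have := add_le_add (mul_le_mul_of_nonneg_left (min_le_left (a + ⟪u, y⟫) (b + ⟪v, y⟫))
          (sub_nonneg.2 ht₁)) (mul_le_mul_of_nonneg_left (min_le_right (a + ⟪u, y⟫) (b + ⟪v, y⟫)) ht₀)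
        linarith
    _ = a + t * (b - a) + ⟪u + t • (v - u), y⟫ := by
        rw [inner_add_left, real_inner_smul_left, inner_sub_left]
        ring
    _ ≤ a + t * (b - a) + r * ‖u + t • (v - u)‖ := by
        gcongr
        exact (real_inner_le_norm _ _).trans
          (by rw [mul_comm]; exact mul_le_mul_of_nonneg_right hy (norm_nonneg _))

end InnerProductSpace

theorem exists_pos_add_mul_lt_mul {c n a : ℝ} (h : n < a) : ∃ r > 0, c + r * n < r * a := by
  have hgap : 0 < a - n := sub_pos.2 h
  refine ⟨(|c| + 1) / (a - n), by positivity, ?_⟩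
  have key : (|c| + 1) / (a - n) * (a - n) = |c| + 1 := div_mul_cancel₀ _ hgap.ne'
  nlinarith [le_abs_self c]

theorem ricceri_strict_minimax_general {X : Type*} {Y : Type*}
    [NormedAddCommGroup Y] [InnerProductSpace ℝ Y]
    (I : X → ℝ) (φ : X → Y)
    (x₀ : X)
    (hImin : ∀ x : X, I x₀ ≤ I x)
    (hnormmin : ∀ x : X, ‖φ x₀‖ ≤ ‖φ x‖)
    (hb : ∃ x : X, ⟪φ x, φ x₀⟫ < ‖φ x₀‖ ^ 2) :
    ∃ r : ℝ, 0 < r ∧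
      (⨆ y : Metric.closedBall (0 : Y) r, ⨅ x : X, ((I x + ⟪φ x, (y : Y)⟫ : ℝ) : EReal)) <
        ⨅ x : X, ⨆ y : Metric.closedBall (0 : Y) r, ((I x + ⟪φ x, (y : Y)⟫ : ℝ) : EReal) := by
  obtain ⟨x₁, hx₁⟩ := hb
  have hdescent : ⟪φ x₀, φ x₁ - φ x₀⟫ < 0 := by
    rw [inner_sub_right, real_inner_self_eq_norm_sq, real_inner_comm]
    linarith
  obtain ⟨t, ht₀, ht₁, hshort⟩ := exists_norm_add_smul_lt_norm hdescent
  obtain ⟨r, hr, hgap⟩ := exists_pos_add_mul_lt_mul (c := t * (I x₁ - I x₀)) hshort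
  refine ⟨r, hr, ?_⟩
  calc (⨆ y : Metric.closedBall (0 : Y) r, ⨅ x : X, ((I x + ⟪φ x, (y : Y)⟫ : ℝ) : EReal))
      ≤ ((I x₀ + t * (I x₁ - I x₀) + r * ‖φ x₀ + t • (φ x₁ - φ x₀)‖ : ℝ) : EReal) := by
        refine iSup_le fun ⟨y, hy⟩ => ?_
        rcases min_le_iff.1 (min_add_inner_le_of_norm_le (a := I x₀) (b := I x₁) ht₀.le ht₁
          (mem_closedBall_zero_iff.1 hy)) with h | h
        · exact (iInf_le _ x₀).trans (EReal.coe_le_coe_iff.2 h)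
        · exact (iInf_le _ x₁).trans (EReal.coe_le_coe_iff.2 h)
    _ < ((I x₀ + r * ‖φ x₀‖ : ℝ) : EReal) := EReal.coe_lt_coe_iff.2 (by linarith)
    _ ≤ ⨅ x : X, ⨆ y : Metric.closedBall (0 : Y) r, ((I x + ⟪φ x, (y : Y)⟫ : ℝ) : EReal) := by
        refine le_iInf fun x => ?_
        obtain ⟨y, hy, hinner⟩ := exists_mem_closedBall_inner_eq_mul_norm (φ x) hr.le
        refine le_trans ?_ (le_iSup _ (⟨y, hy⟩ : Metric.closedBall (0 : Y) r))
        rw [EReal.coe_le_coe_iff, hinner]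
        nlinarith [hImin x, hnormmin x]

/-- Under the hypotheses of Theorem 2.1, there is `r > 0` for which the strict minimax
inequality `sup_{y ∈ B_r} inf_{x ∈ X} (I x + ⟨φ x, y⟩) < inf_{x ∈ X} sup_{y ∈ B_r} (I x + ⟨φ x, y⟩)`
holds, where `B_r` is the closed ball of radius `r` centered at `0` in `Y`. -/
theorem ricceri_strict_minimax {X : Type*} [TopologicalSpace X] {Y : Type*}
    [NormedAddCommGroup Y] [InnerProductSpace ℝ Y] [CompleteSpace Y]
    (T : Set Y) (hTconv : Convex ℝ T) (hTdense : Dense T)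
    (I : X → ℝ) (φ : X → Y)
    (hlsc : ∀ y ∈ T, LowerSemicontinuous (fun x : X => I x + ⟪φ x, y⟫))
    (hinfcpt : ∀ y ∈ T, ∀ r : ℝ, IsCompact {x : X | I x + ⟪φ x, y⟫ ≤ r})
    (x₀ : X) (hφx₀ : φ x₀ ≠ 0)
    (hImin : ∀ x : X, I x₀ ≤ I x)
    (hnormmin : ∀ x : X, ‖φ x₀‖ ≤ ‖φ x‖)
    (hb : ∃ x : X, ⟪φ x, φ x₀⟫ < ‖φ x₀‖ ^ 2) :
    ∃ r : ℝ, 0 < r ∧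
      (⨆ y : Metric.closedBall (0 : Y) r, ⨅ x : X, ((I x + ⟪φ x, (y : Y)⟫ : ℝ) : EReal)) <
        ⨅ x : X, ⨆ y : Metric.closedBall (0 : Y) r, ((I x + ⟪φ x, (y : Y)⟫ : ℝ) : EReal) :=
  ricceri_strict_minimax_general I φ x₀ hImin hnormmin hb
end

section
/- Let X be a topological space, Y a real Hilbert space with inner product ⟨·,·⟩, T ⊆ Y a convex set dense in Y, and I : X → ℝ, φ : X → Y two functions such that, for each y ∈ T, the function x ↦ I(x) + ⟨φ(x), y⟩ is lower semicontinuous and inf-compact. Assume there exists a point x₀ ∈ X with φ(x₀) ≠ 0 such that x₀ is a global minimum of both the function I and the function x ↦ ‖φ(x)‖, and inf_{x ∈ X} ⟨φ(x), φ(x₀)⟩ < ‖φ(x₀)‖². Then, for every convex set S ⊆ T dense in Y, there exists r > 0 such that sup_{y ∈ B_r ∩ S} inf_{x ∈ X} (I(x) + ⟨φ(x), y⟩) < inf_{x ∈ X} sup_{y ∈ B_r ∩ S} (I(x) + ⟨φ(x), y⟩), where B_r = {y ∈ Y : ‖y‖ ≤ r} is the closed ball in Y centered at 0 of radius r. -/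
open scoped RealInnerProductSpace

/-!
Moving from `φ x₀` towards `φ x₁` first decreases the norm, because `⟪φ x₀, φ x₁ - φ x₀⟫ < 0`;
so some convex combination `z = (1 - ε) φ x₀ + ε φ x₁` has `‖z‖ < ‖φ x₀‖`. For `‖y‖ ≤ r` the
infimum over `x` is at most the same convex combination of the values at `x₀` and `x₁`, hence at
most `(1 - ε) I x₀ + ε I x₁ + r ‖z‖`. On the other side, density of `S` makes the supremum of
`I x + ⟪φ x, y⟫` over `B_r ∩ S` at least `I x + r ‖φ x‖ ≥ I x₀ + r ‖φ x₀‖`. For large `r` the gap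
`r (‖φ x₀‖ - ‖z‖)` exceeds `ε (I x₁ - I x₀)`.
-/

open Metric

section

variable {Y : Type*} [NormedAddCommGroup Y] [InnerProductSpace ℝ Y]

theorem exists_mem_closedBall_inter_lt_inner {S : Set Y} (hS : Dense S) {r : ℝ} (hr : 0 < r)
    (z : Y) {a : ℝ} (ha : a < r * ‖z‖) : ∃ y ∈ closedBall (0 : Y) r ∩ S, a < ⟪z, y⟫ := by
  -- `p` is the point of norm `r` in the direction of `z`, or `0` when `z = 0` (as `r / 0 = 0`).
  set p : Y := (r / ‖z‖) • z
  have hp : ‖p‖ ≤ r ∧ ⟪z, p⟫ = r * ‖z‖ := by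
    rcases eq_or_ne z 0 with rfl | hz
    · simp [p, hr.le]
    · have hz' : ‖z‖ ≠ 0 := norm_ne_zero_iff.2 hz
      rw [norm_smul, real_inner_smul_right, real_inner_self_eq_norm_sq, Real.norm_eq_abs,
        abs_div, abs_norm, abs_of_pos hr]
      exact ⟨(div_mul_cancel₀ r hz').le, by field_simp⟩
  have hp_mem : p ∈ closure (ball 0 r ∩ S) := by
    refine closure_minimal (hS.open_subset_closure_inter isOpen_ball) isClosed_closure ?_
    rw [closure_ball _ hr.ne', mem_closedBall, dist_zero_right]
    exact hp.1
  obtain ⟨y, hya, hyB, hyS⟩ := _root_.mem_closure_iff.1 hp_mem {y | a < ⟪z, y⟫}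
    (isOpen_lt continuous_const (continuous_const.inner continuous_id))
    (show a < ⟪z, p⟫ from hp.2 ▸ ha)
  exact ⟨y, ⟨ball_subset_closedBall hyB, hyS⟩, hya⟩

theorem add_mul_norm_le_iSup_add_inner {S : Set Y} (hS : Dense S) {r : ℝ} (hr : 0 < r)
    (c : ℝ) (z : Y) :
    ((c + r * ‖z‖ : ℝ) : EReal) ≤
      ⨆ y : ↥(closedBall (0 : Y) r ∩ S), ((c + ⟪z, (y : Y)⟫ : ℝ) : EReal) := by
  refine le_of_forall_lt fun b hb => ?_
  obtain ⟨s, hbs, hs⟩ := EReal.lt_iff_exists_real_btwn.1 hb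
  obtain ⟨y, hy, hsy⟩ :=
    exists_mem_closedBall_inter_lt_inner hS hr z (a := s - c)
      (by linarith [EReal.coe_lt_coe_iff.1 hs])
  exact hbs.trans (lt_iSup_iff.2 ⟨⟨y, hy⟩, EReal.coe_lt_coe_iff.2 (by linarith)⟩)

theorem exists_norm_convexCombination_lt {u v : Y} (h : ⟪v, u⟫ < ‖u‖ ^ 2) :
    ∃ ε ∈ Set.Icc (0 : ℝ) 1, ‖(1 - ε) • u + ε • v‖ < ‖u‖ := by
  set w := v - u
  have hw : ⟪u, w⟫ < 0 := by
    rw [inner_sub_right, real_inner_comm, real_inner_self_eq_norm_sq]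
    linarith
  have hw₀ : 0 < ‖w‖ := norm_pos_iff.2 fun h0 => by simp [h0] at hw
  set ε := min 1 (-⟪u, w⟫ / ‖w‖ ^ 2)
  have hε : 0 < ε := lt_min one_pos (div_pos (neg_pos.2 hw) (by positivity))
  have hεw : ε * ‖w‖ ^ 2 ≤ -⟪u, w⟫ := (le_div_iff₀ (by positivity)).1 (min_le_right _ _)
  have hcomb : (1 - ε) • u + ε • v = u + ε • w := by
    simp only [w, smul_sub, sub_smul, one_smul]; abel
  have hsq : ‖u + ε • w‖ ^ 2 = ‖u‖ ^ 2 + ε * (2 * ⟪u, w⟫ + ε * ‖w‖ ^ 2) := by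
    rw [norm_add_sq_real, real_inner_smul_right, norm_smul, Real.norm_eq_abs, abs_of_pos hε]
    ring
  refine ⟨ε, ⟨hε.le, min_le_left _ _⟩, ?_⟩
  rw [hcomb]
  refine lt_of_pow_lt_pow_left₀ 2 (norm_nonneg u) ?_
  rw [hsq]
  nlinarith

theorem iSup_iInf_add_inner_le {X : Type*} {K : Set Y} {r : ℝ} (hK : K ⊆ closedBall 0 r)
    (f : X → ℝ) (g : X → Y) (x₀ x₁ : X) {ε : ℝ} (hε : ε ∈ Set.Icc (0 : ℝ) 1) :
    ⨆ y : ↥K, ⨅ x, ((f x + ⟪g x, (y : Y)⟫ : ℝ) : EReal) ≤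
      (((1 - ε) * f x₀ + ε * f x₁ + r * ‖(1 - ε) • g x₀ + ε • g x₁‖ : ℝ) : EReal) := by
  refine iSup_le fun ⟨y, hy⟩ => ?_
  set F := fun x => f x + ⟪g x, y⟫
  have hyr : ‖y‖ ≤ r := mem_closedBall_zero_iff.1 (hK hy)
  have hmin : min (F x₀) (F x₁) ≤ (1 - ε) * F x₀ + ε * F x₁ :=
    convex_Ici (min (F x₀) (F x₁)) (min_le_left _ _) (min_le_right (F x₀) (F x₁))
      (sub_nonneg.2 hε.2) hε.1 (sub_add_cancel 1 ε)
  have hcomb : (1 - ε) * F x₀ + ε * F x₁ =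
      (1 - ε) * f x₀ + ε * f x₁ + ⟪(1 - ε) • g x₀ + ε • g x₁, y⟫ := by
    simp only [F, inner_add_left, real_inner_smul_left]; ring
  have hinner : ⟪(1 - ε) • g x₀ + ε • g x₁, y⟫ ≤ r * ‖(1 - ε) • g x₀ + ε • g x₁‖ :=
    (real_inner_le_norm _ _).trans (by rw [mul_comm]; gcongr)
  calc ⨅ x, ((F x : ℝ) : EReal) ≤ ((min (F x₀) (F x₁) : ℝ) : EReal) := by
        rw [EReal.coe_strictMono.monotone.map_min]; exact le_min (iInf_le _ x₀) (iInf_le _ x₁)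
    _ ≤ _ := EReal.coe_le_coe_iff.2 (by linarith)

end

theorem ricceri_strict_minimax_dense_subset_general {X : Type*} {Y : Type*}
    [NormedAddCommGroup Y] [InnerProductSpace ℝ Y]
    (T : Set Y)
    (I : X → ℝ) (φ : X → Y)
    (x₀ : X)
    (hImin : ∀ x : X, I x₀ ≤ I x)
    (hnormmin : ∀ x : X, ‖φ x₀‖ ≤ ‖φ x‖)
    (hb : ∃ x : X, ⟪φ x, φ x₀⟫ < ‖φ x₀‖ ^ 2) :
    ∀ S : Set Y, S ⊆ T → Convex ℝ S → Dense S →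
      ∃ r : ℝ, 0 < r ∧
        (⨆ y : ↥(Metric.closedBall (0 : Y) r ∩ S),
            ⨅ x : X, ((I x + ⟪φ x, (y : Y)⟫ : ℝ) : EReal)) <
          ⨅ x : X, ⨆ y : ↥(Metric.closedBall (0 : Y) r ∩ S),
            ((I x + ⟪φ x, (y : Y)⟫ : ℝ) : EReal) := by
  intro S _ _ hS
  obtain ⟨x₁, hx₁⟩ := hb
  obtain ⟨ε, hε, hnorm⟩ := exists_norm_convexCombination_lt hx₁
  obtain ⟨r, hr, hgap⟩ := exists_pos_lt_mul (sub_pos.2 hnorm) (ε * (I x₁ - I x₀))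
  refine ⟨r, hr, ?_⟩
  calc _ ≤ (((1 - ε) * I x₀ + ε * I x₁ + r * ‖(1 - ε) • φ x₀ + ε • φ x₁‖ : ℝ) : EReal) :=
        iSup_iInf_add_inner_le Set.inter_subset_left I φ x₀ x₁ hε
    _ < ((I x₀ + r * ‖φ x₀‖ : ℝ) : EReal) := EReal.coe_lt_coe_iff.2 (by linarith)
    _ ≤ _ := le_iInf fun x => (EReal.coe_le_coe_iff.2 (add_le_add (hImin x)
          (mul_le_mul_of_nonneg_left (hnormmin x) hr.le))).trans
        (add_mul_norm_le_iSup_add_inner hS hr (I x) (φ x))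

/-- Under the hypotheses of Theorem 2.1, for every convex set `S ⊆ T` dense in `Y` there
is `r > 0` such that
`sup_{y ∈ B_r ∩ S} inf_{x ∈ X} (I x + ⟨φ x, y⟩) < inf_{x ∈ X} sup_{y ∈ B_r ∩ S} (I x + ⟨φ x, y⟩)`,
where `B_r` is the closed ball of radius `r` centered at `0` in `Y`. -/
theorem ricceri_strict_minimax_dense_subset {X : Type*} [TopologicalSpace X] {Y : Type*}
    [NormedAddCommGroup Y] [InnerProductSpace ℝ Y] [CompleteSpace Y]
    (T : Set Y) (hTconv : Convex ℝ T) (hTdense : Dense T)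
    (I : X → ℝ) (φ : X → Y)
    (hlsc : ∀ y ∈ T, LowerSemicontinuous (fun x : X => I x + ⟪φ x, y⟫))
    (hinfcpt : ∀ y ∈ T, ∀ r : ℝ, IsCompact {x : X | I x + ⟪φ x, y⟫ ≤ r})
    (x₀ : X) (hφx₀ : φ x₀ ≠ 0)
    (hImin : ∀ x : X, I x₀ ≤ I x)
    (hnormmin : ∀ x : X, ‖φ x₀‖ ≤ ‖φ x‖)
    (hb : ∃ x : X, ⟪φ x, φ x₀⟫ < ‖φ x₀‖ ^ 2) :
    ∀ S : Set Y, S ⊆ T → Convex ℝ S → Dense S →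
      ∃ r : ℝ, 0 < r ∧
        (⨆ y : ↥(Metric.closedBall (0 : Y) r ∩ S),
            ⨅ x : X, ((I x + ⟪φ x, (y : Y)⟫ : ℝ) : EReal)) <
          ⨅ x : X, ⨆ y : ↥(Metric.closedBall (0 : Y) r ∩ S),
            ((I x + ⟪φ x, (y : Y)⟫ : ℝ) : EReal) :=
  ricceri_strict_minimax_dense_subset_general T I φ x₀ hImin hnormmin hb
end
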